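/- Let G : [0,1] → ℝ be continuously differentiable, and let k : ℝ × ℝ → ℝ be a symmetric positive semidefinite kernel that is twice continuously differentiable with sup_{x∈ℝ} k(x,x) ≤ C_k and sup_{x∈ℝ} ∂_1∂_2 k(x,x) ≤ C_k for some constant C_k > 0. Let P be the pushforward of the uniform distribution on [0,1] under G, let u_1,…,u_n ∈ [0,1], and let Pⁿ = (1/n) Σ_{i=1}^n δ_{G(u_i)}. Then MMD(P, Pⁿ) ≤ √(C_k) · (∫_0^1 |G′(u)| du) · D*({u_i}_{i=1}^n), where D*({u_i}_{i=1}^n) = sup_{v ∈ [0,1]} | (1/n) Σ_{i=1}^n 1[u_i ∈ [0,v)] − v |. -/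

import Mathlib

open MeasureTheory
open scoped ENNReal

/-- The star discrepancy of a point set `u_1, …, u_n ⊂ [0,1]`. -/
noncomputable def starDisc {n : ℕ} (u : Fin n → ℝ) : ℝ :=
  ⨆ v : Set.Icc (0 : ℝ) 1,
    |(∑ i, if u i ∈ Set.Ico (0 : ℝ) (v : ℝ) then (1 : ℝ) else 0) / n - (v : ℝ)|

/-- A symmetric positive semidefinite kernel. -/
def IsPSDKernel {E : Type*} (k : E → E → ℝ) : Prop :=
  (∀ x y, k x y = k y x) ∧
  ∀ (N : ℕ) (x : Fin N → E) (c : Fin N → ℝ), 0 ≤ ∑ i, ∑ j, c i * c j * k (x i) (x j)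

/-- The squared maximum mean discrepancy between two measures with respect to a kernel. -/
noncomputable def mmdSq {E : Type*} [MeasurableSpace E] (k : E → E → ℝ)
    (P Q : Measure E) : ℝ :=
  (∫ x, ∫ y, k x y ∂P ∂P) - 2 * (∫ x, ∫ y, k x y ∂Q ∂P) + (∫ x, ∫ y, k x y ∂Q ∂Q)

/-- The maximum mean discrepancy. -/
noncomputable def mmd {E : Type*} [MeasurableSpace E] (k : E → E → ℝ)
    (P Q : Measure E) : ℝ :=
  Real.sqrt (mmdSq k P Q)

/-- The empirical measure `(1/n) ∑ δ_{x i}` of a finite family of points. -/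
noncomputable def empirical {E : Type*} [MeasurableSpace E] {n : ℕ} (x : Fin n → E) :
    Measure E :=
  (n : ℝ≥0∞)⁻¹ • ∑ i, Measure.dirac (x i)

open Function intervalIntegral



noncomputable def D1 (k : ℝ → ℝ → ℝ) (p : ℝ × ℝ) : ℝ := fderiv ℝ (uncurry k) p (1, 0)
noncomputable def Psi (k : ℝ → ℝ → ℝ) (p : ℝ × ℝ) : ℝ := fderiv ℝ (D1 k) p (0, 1)

variable {k : ℝ → ℝ → ℝ}

lemma contDiff_D1 (hk : ContDiff ℝ 2 (uncurry k)) : ContDiff ℝ 1 (D1 k) := by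
  have h := hk.fderiv_right (m := 1) (by norm_num)
  exact (ContinuousLinearMap.apply ℝ ℝ ((1:ℝ), (0:ℝ))).contDiff.comp h

lemma continuous_Psi (hk : ContDiff ℝ 2 (uncurry k)) : Continuous (Psi k) := by
  have h := (contDiff_D1 hk).continuous_fderiv one_ne_zero
  exact (ContinuousLinearMap.apply ℝ ℝ ((0:ℝ), (1:ℝ))).continuous.comp h

lemma hasDerivAt_fst (hk : ContDiff ℝ 2 (uncurry k)) (x y : ℝ) :
    HasDerivAt (fun x' => k x' y) (D1 k (x, y)) x := by
  have hf : HasFDerivAt (uncurry k) (fderiv ℝ (uncurry k) (x, y)) (x, y) :=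
    (hk.differentiable (by norm_num) (x, y)).hasFDerivAt
  have hg : HasDerivAt (fun x' : ℝ => (x', y)) ((1:ℝ), (0:ℝ)) x :=
    (hasDerivAt_id x).prodMk (hasDerivAt_const x y)
  exact hf.comp_hasDerivAt x hg

lemma hasDerivAt_D1_snd (hk : ContDiff ℝ 2 (uncurry k)) (x y : ℝ) :
    HasDerivAt (fun y' => D1 k (x, y')) (Psi k (x, y)) y := by
  have hf : HasFDerivAt (D1 k) (fderiv ℝ (D1 k) (x, y)) (x, y) :=
    ((contDiff_D1 hk).differentiable one_ne_zero (x, y)).hasFDerivAt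
  have hg : HasDerivAt (fun y' : ℝ => (x, y')) ((0:ℝ), (1:ℝ)) y :=
    (hasDerivAt_const y x).prodMk (hasDerivAt_id y)
  exact hf.comp_hasDerivAt y hg

lemma continuous_D1 (hk : ContDiff ℝ 2 (uncurry k)) : Continuous (D1 k) := (contDiff_D1 hk).continuous

lemma psi_eq (hk : ContDiff ℝ 2 (uncurry k)) (x y : ℝ) :
    deriv (fun y' => deriv (fun x' => k x' y') x) y = Psi k (x, y) := by
  have : (fun y' => deriv (fun x' => k x' y') x) = fun y' => D1 k (x, y') := by
    funext y'; exact (hasDerivAt_fst hk x y').deriv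
  rw [this]
  exact (hasDerivAt_D1_snd hk x y).deriv





lemma dd_eq (hk : ContDiff ℝ 2 (uncurry k)) (x y ε δ : ℝ) :
    k (x+ε) (y+δ) - k (x+ε) y - k x (y+δ) + k x y
      = ∫ s in x..(x+ε), ∫ t in y..(y+δ), Psi k (s, t) := by
  have hinner : ∀ s : ℝ, ∫ t in y..(y+δ), Psi k (s, t) = D1 k (s, y+δ) - D1 k (s, y) := by
    intro s
    refine intervalIntegral.integral_eq_sub_of_hasDerivAt
      (fun t _ => hasDerivAt_D1_snd hk s t) ?_
    exact ((continuous_Psi hk).comp (by continuity)).intervalIntegrable _ _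
  have houter : ∫ s in x..(x+ε), (D1 k (s, y+δ) - D1 k (s, y))
      = (k (x+ε) (y+δ) - k (x+ε) y) - (k x (y+δ) - k x y) := by
    refine intervalIntegral.integral_eq_sub_of_hasDerivAt
      (fun s _ => ((hasDerivAt_fst hk s (y+δ)).sub (hasDerivAt_fst hk s y))) ?_
    exact (((continuous_D1 hk).comp (by continuity)).sub
      ((continuous_D1 hk).comp (by continuity))).intervalIntegrable _ _
  calc k (x+ε) (y+δ) - k (x+ε) y - k x (y+δ) + k x y
      = (k (x+ε) (y+δ) - k (x+ε) y) - (k x (y+δ) - k x y) := by ring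
    _ = ∫ s in x..(x+ε), (D1 k (s, y+δ) - D1 k (s, y)) := houter.symm
    _ = ∫ s in x..(x+ε), ∫ t in y..(y+δ), Psi k (s, t) := by
        refine intervalIntegral.integral_congr fun s _ => (hinner s).symm


/-- If a continuous function is negative at `(0,0)`, some small square has negative integral. -/
lemma small_square_neg {g : ℝ × ℝ → ℝ} (hg : Continuous g) (h0 : g (0, 0) < 0) :
    ∃ ε > (0:ℝ), ∫ s in (0:ℝ)..ε, ∫ t in (0:ℝ)..ε, g (s, t) < 0 := by
  have hc : ContinuousAt g (0, 0) := hg.continuousAt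
  rw [Metric.continuousAt_iff] at hc
  obtain ⟨δ, hδ, hδ'⟩ := hc (-g (0, 0) / 2) (by linarith)
  refine ⟨δ / 2, by linarith, ?_⟩
  have key : ∀ p : ℝ × ℝ, p.1 ∈ Set.Icc (0:ℝ) (δ/2) → p.2 ∈ Set.Icc (0:ℝ) (δ/2) →
      g p ≤ g (0, 0) / 2 := by
    intro p hp1 hp2
    have hdist : dist p (0, 0) < δ := by
      rw [Prod.dist_eq]
      have h1 : dist p.1 (0:ℝ) < δ := by
        rw [Real.dist_eq, sub_zero, abs_of_nonneg hp1.1]; linarith [hp1.2]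
      have h2 : dist p.2 (0:ℝ) < δ := by
        rw [Real.dist_eq, sub_zero, abs_of_nonneg hp2.1]; linarith [hp2.2]
      exact max_lt h1 h2
    have := hδ' hdist
    rw [Real.dist_eq] at this
    have := abs_lt.mp this
    linarith [this.1, this.2]
  have hcont2 : ∀ s : ℝ, Continuous fun t => g (s, t) := fun s => hg.comp (by continuity)
  have hparam : Continuous fun s => ∫ t in (0:ℝ)..(δ/2), g (s, t) := by
    exact intervalIntegral.continuous_parametric_intervalIntegral_of_continuous
      (by exact hg) continuous_const
  have hinner : ∀ s ∈ Set.Icc (0:ℝ) (δ/2),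
      (∫ t in (0:ℝ)..(δ/2), g (s, t)) ≤ (δ/2) * (g (0,0) / 2) := by
    intro s hs
    calc (∫ t in (0:ℝ)..(δ/2), g (s, t)) ≤ ∫ _t in (0:ℝ)..(δ/2), g (0,0)/2 := by
          refine intervalIntegral.integral_mono_on (by linarith)
            ((hcont2 s).intervalIntegrable _ _)
            (intervalIntegrable_const) (fun t ht => key (s, t) hs ht)
      _ = (δ/2) * (g (0,0)/2) := by simp only [intervalIntegral.integral_const, smul_eq_mul]; ring
  have houter : (∫ s in (0:ℝ)..(δ/2), ∫ t in (0:ℝ)..(δ/2), g (s, t))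
      ≤ (δ/2) * ((δ/2) * (g (0,0)/2)) := by
    calc (∫ s in (0:ℝ)..(δ/2), ∫ t in (0:ℝ)..(δ/2), g (s, t))
        ≤ ∫ _s in (0:ℝ)..(δ/2), (δ/2) * (g (0,0)/2) := by
          refine intervalIntegral.integral_mono_on (by linarith)
            (hparam.intervalIntegrable _ _) intervalIntegrable_const hinner
      _ = (δ/2) * ((δ/2) * (g (0,0)/2)) := by simp only [intervalIntegral.integral_const, smul_eq_mul]; ring
  have : (δ/2) * ((δ/2) * (g (0,0)/2)) < 0 := by
    apply mul_neg_of_pos_of_neg (by linarith)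
    apply mul_neg_of_pos_of_neg (by linarith)
    linarith
  linarith

/-- If a continuous function is positive at `(0,0)`, some small square has positive integral. -/
lemma small_square_pos {g : ℝ × ℝ → ℝ} (hg : Continuous g) (h0 : 0 < g (0, 0)) :
    ∃ ε > (0:ℝ), 0 < ∫ s in (0:ℝ)..ε, ∫ t in (0:ℝ)..ε, g (s, t) := by
  obtain ⟨ε, hε, h⟩ := small_square_neg (g := -g) (by continuity) (by simpa using h0)
  refine ⟨ε, hε, ?_⟩
  have : ∀ s : ℝ, ∫ t in (0:ℝ)..ε, (-g) (s, t) = -∫ t in (0:ℝ)..ε, g (s, t) := by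
    intro s; simp [intervalIntegral.integral_neg]
  rw [intervalIntegral.integral_congr (fun s _ => this s), intervalIntegral.integral_neg] at h
  linarith





lemma II_eq_dd (hk : ContDiff ℝ 2 (uncurry k)) (a b ε : ℝ) :
    ∫ s in (0:ℝ)..ε, ∫ t in (0:ℝ)..ε, Psi k (a+s, b+t)
      = k (a+ε) (b+ε) - k (a+ε) b - k a (b+ε) + k a b := by
  have h1 : ∀ s : ℝ, ∫ t in (0:ℝ)..ε, Psi k (s, b+t) = ∫ t in b..(b+ε), Psi k (s, t) := by
    intro s
    have := intervalIntegral.integral_comp_add_left (fun t => Psi k (s, t)) b (a := 0) (b := ε)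
    simpa using this
  calc ∫ s in (0:ℝ)..ε, ∫ t in (0:ℝ)..ε, Psi k (a+s, b+t)
      = ∫ s in (0:ℝ)..ε, (fun s' => ∫ t in b..(b+ε), Psi k (s', t)) (a + s) := by
        exact intervalIntegral.integral_congr fun s _ => h1 (a+s)
    _ = ∫ s in a..(a+ε), ∫ t in b..(b+ε), Psi k (s, t) := by
        have := intervalIntegral.integral_comp_add_left
          (fun s' => ∫ t in b..(b+ε), Psi k (s', t)) a (a := 0) (b := ε)
        simpa using this
    _ = k (a+ε) (b+ε) - k (a+ε) b - k a (b+ε) + k a b := (dd_eq hk a b ε ε).symm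

lemma dd_psd (hpsd : IsPSDKernel k) (x y c d ε : ℝ) :
    0 ≤ c^2 * (k (x+ε) (x+ε) - k (x+ε) x - k x (x+ε) + k x x)
      + c*d*((k (x+ε) (y+ε) - k (x+ε) y - k x (y+ε) + k x y)
           + (k (y+ε) (x+ε) - k (y+ε) x - k y (x+ε) + k y x))
      + d^2 * (k (y+ε) (y+ε) - k (y+ε) y - k y (y+ε) + k y y) := by
  have h := hpsd.2 4 ![x+ε, x, y+ε, y] ![c, -c, d, -d]
  simp only [Fin.sum_univ_four, Matrix.cons_val_zero, Matrix.cons_val_one, Matrix.head_cons,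
    Matrix.cons_val_two, Matrix.tail_cons, Matrix.cons_val_three] at h
  linear_combination h

lemma psi_quadratic (hpsd : IsPSDKernel k) (hk : ContDiff ℝ 2 (uncurry k)) (x y c d : ℝ) :
    0 ≤ c^2 * Psi k (x,x) + c*d*(Psi k (x,y) + Psi k (y,x)) + d^2 * Psi k (y,y) := by
  by_contra hcon
  push_neg at hcon
  set g : ℝ × ℝ → ℝ := fun p =>
    c^2 * Psi k (x+p.1, x+p.2) + c*d*(Psi k (x+p.1, y+p.2) + Psi k (y+p.1, x+p.2))
      + d^2 * Psi k (y+p.1, y+p.2) with hgdef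
  have hgc : Continuous g := by
    apply Continuous.add
    apply Continuous.add
    · exact continuous_const.mul ((continuous_Psi hk).comp (by continuity))
    · exact continuous_const.mul (((continuous_Psi hk).comp (by continuity)).add
        ((continuous_Psi hk).comp (by continuity)))
    · exact continuous_const.mul ((continuous_Psi hk).comp (by continuity))
  have hg0 : g (0, 0) < 0 := by simpa [hgdef] using hcon
  obtain ⟨ε, hε, hneg⟩ := small_square_neg hgc hg0
  -- compute the integral
  have hPc : ∀ a b : ℝ, Continuous fun p : ℝ × ℝ => Psi k (a + p.1, b + p.2) :=
    fun a b => (continuous_Psi hk).comp (by continuity)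
  have hint : ∀ (a b : ℝ) (s : ℝ), IntervalIntegrable (fun t => Psi k (a+s, b+t)) volume 0 ε :=
    fun a b s => ((continuous_Psi hk).comp (by continuity)).intervalIntegrable _ _
  have hJc : ∀ a b : ℝ, Continuous fun s => ∫ t in (0:ℝ)..ε, Psi k (a+s, b+t) := by
    intro a b
    exact intervalIntegral.continuous_parametric_intervalIntegral_of_continuous
      (by exact hPc a b) continuous_const
  have hsplit : (∫ s in (0:ℝ)..ε, ∫ t in (0:ℝ)..ε, g (s, t))
      = c^2 * (∫ s in (0:ℝ)..ε, ∫ t in (0:ℝ)..ε, Psi k (x+s, x+t))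
        + c*d*((∫ s in (0:ℝ)..ε, ∫ t in (0:ℝ)..ε, Psi k (x+s, y+t))
             + (∫ s in (0:ℝ)..ε, ∫ t in (0:ℝ)..ε, Psi k (y+s, x+t)))
        + d^2 * (∫ s in (0:ℝ)..ε, ∫ t in (0:ℝ)..ε, Psi k (y+s, y+t)) := by
    have hinner : ∀ s : ℝ, ∫ t in (0:ℝ)..ε, g (s, t)
        = c^2 * (∫ t in (0:ℝ)..ε, Psi k (x+s, x+t))
          + c*d*((∫ t in (0:ℝ)..ε, Psi k (x+s, y+t)) + (∫ t in (0:ℝ)..ε, Psi k (y+s, x+t)))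
          + d^2 * (∫ t in (0:ℝ)..ε, Psi k (y+s, y+t)) := by
      intro s
      rw [hgdef]
      rw [intervalIntegral.integral_add (((hint x x s).const_mul _).add
            (((hint x y s).add (hint y x s)).const_mul _)) ((hint y y s).const_mul _),
          intervalIntegral.integral_add ((hint x x s).const_mul _)
            (((hint x y s).add (hint y x s)).const_mul _),
          intervalIntegral.integral_const_mul, intervalIntegral.integral_const_mul,
          intervalIntegral.integral_const_mul,
          intervalIntegral.integral_add (hint x y s) (hint y x s)]
    rw [intervalIntegral.integral_congr fun s _ => hinner s]
    have hII : ∀ a b : ℝ, IntervalIntegrable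
        (fun s => ∫ t in (0:ℝ)..ε, Psi k (a+s, b+t)) volume 0 ε :=
      fun a b => (hJc a b).intervalIntegrable _ _
    rw [intervalIntegral.integral_add (((hII x x).const_mul _).add
          (((hII x y).add (hII y x)).const_mul _)) ((hII y y).const_mul _),
        intervalIntegral.integral_add ((hII x x).const_mul _)
          (((hII x y).add (hII y x)).const_mul _),
        intervalIntegral.integral_const_mul, intervalIntegral.integral_const_mul,
        intervalIntegral.integral_const_mul,
        intervalIntegral.integral_add (hII x y) (hII y x)]
  rw [hsplit, II_eq_dd hk, II_eq_dd hk, II_eq_dd hk, II_eq_dd hk] at hneg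
  have := dd_psd hpsd x y c d ε
  linarith

lemma psi_symm (hpsd : IsPSDKernel k) (hk : ContDiff ℝ 2 (uncurry k)) (x y : ℝ) :
    Psi k (x, y) = Psi k (y, x) := by
  have key : ∀ a b : ℝ, Psi k (a, b) ≤ Psi k (b, a) := by
    intro a b
    by_contra hcon
    push_neg at hcon
    set g : ℝ × ℝ → ℝ := fun p => Psi k (b+p.1, a+p.2) - Psi k (a+p.1, b+p.2) with hgdef
    have hgc : Continuous g :=
      ((continuous_Psi hk).comp (by continuity)).sub ((continuous_Psi hk).comp (by continuity))
    have hg0 : g (0, 0) < 0 := by simp [hgdef]; linarith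
    obtain ⟨ε, hε, hneg⟩ := small_square_neg hgc hg0
    have hint : ∀ (a b : ℝ) (s : ℝ), IntervalIntegrable (fun t => Psi k (a+s, b+t)) volume 0 ε :=
      fun a b s => ((continuous_Psi hk).comp (by continuity)).intervalIntegrable _ _
    have hJc : ∀ a b : ℝ, Continuous fun s => ∫ t in (0:ℝ)..ε, Psi k (a+s, b+t) :=
      fun a b => intervalIntegral.continuous_parametric_intervalIntegral_of_continuous
        (by exact (continuous_Psi hk).comp (by continuity)) continuous_const
    have hsplit : (∫ s in (0:ℝ)..ε, ∫ t in (0:ℝ)..ε, g (s, t))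
        = (∫ s in (0:ℝ)..ε, ∫ t in (0:ℝ)..ε, Psi k (b+s, a+t))
          - (∫ s in (0:ℝ)..ε, ∫ t in (0:ℝ)..ε, Psi k (a+s, b+t)) := by
      have hinner : ∀ s : ℝ, ∫ t in (0:ℝ)..ε, g (s, t)
          = (∫ t in (0:ℝ)..ε, Psi k (b+s, a+t)) - (∫ t in (0:ℝ)..ε, Psi k (a+s, b+t)) := by
        intro s
        rw [hgdef]
        exact intervalIntegral.integral_sub (hint b a s) (hint a b s)
      rw [intervalIntegral.integral_congr fun s _ => hinner s]
      exact intervalIntegral.integral_sub ((hJc b a).intervalIntegrable _ _)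
        ((hJc a b).intervalIntegrable _ _)
    rw [hsplit, II_eq_dd hk, II_eq_dd hk] at hneg
    have hsym := hpsd.1
    have : k (b+ε) (a+ε) - k (b+ε) a - k b (a+ε) + k b a
        = k (a+ε) (b+ε) - k (a+ε) b - k a (b+ε) + k a b := by
      rw [hsym (b+ε) (a+ε), hsym (b+ε) a, hsym b (a+ε), hsym b a]; ring
    linarith
  exact le_antisymm (key x y) (key y x)


lemma psi_diag_nonneg (hpsd : IsPSDKernel k) (hk : ContDiff ℝ 2 (uncurry k)) (x : ℝ) :
    0 ≤ Psi k (x, x) := by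
  have := psi_quadratic hpsd hk x x 1 0
  linarith

lemma psi_bound (hpsd : IsPSDKernel k) (hk : ContDiff ℝ 2 (uncurry k)) {Ck : ℝ}
    (hCk : 0 < Ck) (hdiag : ∀ x, Psi k (x, x) ≤ Ck) (x y : ℝ) : |Psi k (x, y)| ≤ Ck := by
  have hA := psi_diag_nonneg hpsd hk x
  have hD := psi_diag_nonneg hpsd hk y
  have hq : ∀ t : ℝ, 0 ≤ Psi k (x,x) * (t*t) + (2 * Psi k (x,y)) * t + Psi k (y,y) := by
    intro t
    have := psi_quadratic hpsd hk x y t 1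
    rw [psi_symm hpsd hk y x] at this
    nlinarith [this]
  have hdis := discrim_le_zero hq
  rw [discrim] at hdis
  have hsq : Psi k (x,y)^2 ≤ Ck^2 := by
    nlinarith [hdiag x, hdiag y, mul_le_mul (hdiag x) (hdiag y) hD hCk.le]
  calc |Psi k (x,y)| = Real.sqrt (Psi k (x,y)^2) := (Real.sqrt_sq_eq_abs _).symm
    _ ≤ Real.sqrt (Ck^2) := Real.sqrt_le_sqrt hsq
    _ = Ck := Real.sqrt_sq hCk.le


lemma primitive_eq_indicator {ρ : ℝ → ℝ} (hρ : Continuous ρ) {c : ℝ}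
    (hc : c ∈ Set.Icc (0:ℝ) 1) :
    (∫ b in (0:ℝ)..c, ρ b) = ∫ b in (0:ℝ)..1, ρ b * (if b < c then 1 else 0) := by
  have hind : (fun x => ρ x * (if x < c then 1 else 0)) = (Set.Iio c).indicator ρ := by
    funext x
    by_cases h : x < c <;> simp [Set.indicator, h]
  have hint : ∀ a b : ℝ, IntervalIntegrable (fun x => ρ x * (if x < c then 1 else 0)) volume a b := by
    intro a b
    rw [hind, intervalIntegrable_iff]
    exact ((hρ.intervalIntegrable a b).def').indicator measurableSet_Iio
  have hsplit := intervalIntegral.integral_add_adjacent_intervals (hint 0 c) (hint c 1)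
  have hae : ∀ᵐ x : ℝ, x ≠ c := by
    refine MeasureTheory.ae_iff.mpr ?_
    simp only [not_not, Set.setOf_eq_eq_singleton]
    exact measure_singleton c
  have h1 : (∫ b in (0:ℝ)..c, ρ b * (if b < c then 1 else 0)) = ∫ b in (0:ℝ)..c, ρ b := by
    apply intervalIntegral.integral_congr_ae
    filter_upwards [hae] with x hx hmem
    rw [Set.uIoc_of_le hc.1] at hmem
    have hx2 : x < c := lt_of_le_of_ne hmem.2 hx
    simp [hx2]
  have h2 : (∫ b in c..(1:ℝ), ρ b * (if b < c then 1 else 0)) = 0 := by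
    rw [intervalIntegral.integral_congr_ae (g := fun _ => (0:ℝ)) ?_, intervalIntegral.integral_zero]
    filter_upwards with x hmem
    rw [Set.uIoc_of_le hc.2] at hmem
    have : ¬ x < c := not_lt.mpr hmem.1.le
    simp [this]
  rw [← hsplit, h1, h2, add_zero]

lemma integral_primitive_eq {ρ : ℝ → ℝ} (hρ : Continuous ρ) :
    (∫ t in (0:ℝ)..1, ∫ b in (0:ℝ)..t, ρ b) = ∫ b in (0:ℝ)..1, ρ b * (1 - b) := by
  set F : ℝ → ℝ := fun t => ∫ b in (0:ℝ)..t, ρ b with hF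
  have hFd : ∀ t : ℝ, HasDerivAt F (ρ t) t := fun t =>
    intervalIntegral.integral_hasDerivAt_right (hρ.intervalIntegrable 0 t)
      (hρ.stronglyMeasurableAtFilter _ _) hρ.continuousAt
  have hFc : Continuous F :=
    intervalIntegral.continuous_primitive (fun a b => hρ.intervalIntegrable a b) 0
  have hΦ : ∀ t : ℝ, HasDerivAt (fun t' => F t' * (t' - 1)) (ρ t * (t - 1) + F t) t := by
    intro t
    have := (hFd t).mul ((hasDerivAt_id t).sub (hasDerivAt_const t 1))
    exact this.congr_deriv (by simp)
  have hfull : (∫ t in (0:ℝ)..1, (ρ t * (t - 1) + F t)) = F 1 * (1 - 1) - F 0 * (0 - 1) := by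
    refine intervalIntegral.integral_eq_sub_of_hasDerivAt (fun t _ => hΦ t) ?_
    exact ((hρ.mul (by continuity)).add hFc).intervalIntegrable _ _
  have hF0 : F 0 = 0 := by simp [hF]
  rw [intervalIntegral.integral_add (Continuous.intervalIntegrable (u := fun t => ρ t * (t - 1)) (hρ.mul (by continuity)) _ _)
      (hFc.intervalIntegrable _ _)] at hfull
  have : (∫ t in (0:ℝ)..1, ρ t * (t - 1)) = - ∫ b in (0:ℝ)..1, ρ b * (1 - b) := by
    rw [← intervalIntegral.integral_neg]
    exact intervalIntegral.integral_congr fun x _ => by ring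
  rw [this] at hfull
  rw [hF0] at hfull
  linarith [hfull]

noncomputable def wfun {n : ℕ} (u : Fin n → ℝ) (b : ℝ) : ℝ :=
  (1 - b) - (n:ℝ)⁻¹ * ∑ j, (if b < u j then (1:ℝ) else 0)

lemma intervalIntegrable_mul_ind {ρ : ℝ → ℝ} (hρ : Continuous ρ) (c a b : ℝ) :
    IntervalIntegrable (fun x => ρ x * (if x < c then 1 else 0)) volume a b := by
  have hind : (fun x => ρ x * (if x < c then 1 else 0)) = (Set.Iio c).indicator ρ := by
    funext x
    by_cases h : x < c <;> simp [Set.indicator, h]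
  rw [hind, intervalIntegrable_iff]
  exact ((hρ.intervalIntegrable a b).def').indicator measurableSet_Iio

lemma T_core {n : ℕ} (hn : 0 < n) (u : Fin n → ℝ) (hu : ∀ i, u i ∈ Set.Icc (0:ℝ) 1)
    {ρ : ℝ → ℝ} (hρ : Continuous ρ) :
    (∫ t in (0:ℝ)..1, ∫ b in (0:ℝ)..t, ρ b) - (n:ℝ)⁻¹ * ∑ i, ∫ b in (0:ℝ)..(u i), ρ b
      = ∫ b in (0:ℝ)..1, ρ b * wfun u b := by
  rw [integral_primitive_eq hρ]
  have hsum : (∑ i, ∫ b in (0:ℝ)..(u i), ρ b)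
      = ∫ b in (0:ℝ)..1, ∑ i, ρ b * (if b < u i then 1 else 0) := by
    rw [intervalIntegral.integral_finset_sum (fun i _ => intervalIntegrable_mul_ind hρ (u i) 0 1)]
    exact Finset.sum_congr rfl fun i _ => primitive_eq_indicator hρ (hu i)
  rw [hsum, ← intervalIntegral.integral_const_mul]
  rw [← intervalIntegral.integral_sub (Continuous.intervalIntegrable (u := fun b => ρ b * (1 - b)) (hρ.mul (by continuity)) _ _) ?_]
  · apply intervalIntegral.integral_congr
    intro b _
    simp only []
    rw [← Finset.mul_sum]
    simp only [wfun]
    ring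
  · apply IntervalIntegrable.const_mul
    have heq : (fun b => ∑ i, ρ b * (if b < u i then (1:ℝ) else 0))
        = ∑ i : Fin n, (fun b => ρ b * (if b < u i then (1:ℝ) else 0)) := by
      funext b; simp
    rw [heq]
    exact IntervalIntegrable.sum _ fun i _ => intervalIntegrable_mul_ind hρ (u i) 0 1




variable {n : ℕ} {u : Fin n → ℝ}

lemma starDisc_bdd (hn : 0 < n) :
    BddAbove (Set.range fun v : Set.Icc (0:ℝ) 1 =>
      |(∑ i, if u i ∈ Set.Ico (0 : ℝ) (v : ℝ) then (1 : ℝ) else 0) / n - (v : ℝ)|) := by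
  refine ⟨2, ?_⟩
  rintro x ⟨v, rfl⟩
  have hS0 : (0:ℝ) ≤ ∑ i, (if u i ∈ Set.Ico (0 : ℝ) (v:ℝ) then (1:ℝ) else 0) :=
    Finset.sum_nonneg fun i _ => by positivity
  have hSn : (∑ i, if u i ∈ Set.Ico (0 : ℝ) (v:ℝ) then (1:ℝ) else 0) ≤ n := by
    calc (∑ i, if u i ∈ Set.Ico (0 : ℝ) (v:ℝ) then (1:ℝ) else 0) ≤ ∑ _i : Fin n, (1:ℝ) :=
        Finset.sum_le_sum fun i _ => by split <;> norm_num
      _ = n := by simp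
  have hnn : (0:ℝ) < n := by exact_mod_cast hn
  have h1 : (∑ i, if u i ∈ Set.Ico (0 : ℝ) (v:ℝ) then (1:ℝ) else 0) / n ≤ 1 :=
    (div_le_one hnn).mpr hSn
  have h2 : (0:ℝ) ≤ (∑ i, if u i ∈ Set.Ico (0 : ℝ) (v:ℝ) then (1:ℝ) else 0) / n :=
    div_nonneg hS0 hnn.le
  have hv0 : (0:ℝ) ≤ (v:ℝ) := v.2.1
  have hv1 : (v:ℝ) ≤ 1 := v.2.2
  rw [abs_le]
  constructor <;> linarith

lemma le_starDisc (hn : 0 < n) {v : ℝ} (hv : v ∈ Set.Icc (0:ℝ) 1) :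
    |(∑ i, if u i ∈ Set.Ico (0 : ℝ) v then (1 : ℝ) else 0) / n - v| ≤ starDisc u :=
  le_ciSup (starDisc_bdd hn) (⟨v, hv⟩ : Set.Icc (0:ℝ) 1)

lemma starDisc_nonneg (hn : 0 < n) : 0 ≤ starDisc u :=
  le_trans (abs_nonneg _) (le_starDisc hn ⟨le_refl 0, zero_le_one⟩)

lemma wfun_eq (hn : 0 < n) (hu : ∀ i, u i ∈ Set.Icc (0:ℝ) 1) (b : ℝ) :
    wfun u b = (∑ j, if u j ≤ b then (1:ℝ) else 0) / n - b := by
  have hsum : (∑ j, (if b < u j then (1:ℝ) else 0)) + (∑ j, if u j ≤ b then (1:ℝ) else 0)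
      = n := by
    rw [← Finset.sum_add_distrib]
    have : ∀ j : Fin n, ((if b < u j then (1:ℝ) else 0) + (if u j ≤ b then (1:ℝ) else 0)) = 1 := by
      intro j
      rcases lt_or_ge b (u j) with h | h
      · simp [h, not_le.mpr h]
      · simp [h, not_lt.mpr h]
    rw [Finset.sum_congr rfl fun j _ => this j]
    simp
  have hnn : (n:ℝ) ≠ 0 := by positivity
  have hA : (∑ j, (if b < u j then (1:ℝ) else 0))
      = (n:ℝ) - ∑ j, (if u j ≤ b then (1:ℝ) else 0) := by linarith [hsum]
  rw [wfun, hA, mul_sub, inv_mul_cancel₀ hnn, div_eq_inv_mul]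
  ring

lemma abs_wfun_le (hn : 0 < n) (hu : ∀ i, u i ∈ Set.Icc (0:ℝ) 1) {b : ℝ}
    (hb : b ∈ Set.Icc (0:ℝ) 1) : |wfun u b| ≤ starDisc u := by
  rw [wfun_eq hn hu]
  set S : ℝ → ℝ := fun c => ∑ j, (if u j ≤ c then (1:ℝ) else 0) with hSdef
  rcases eq_or_lt_of_le hb.2 with hb1 | hb1
  · have : ∀ j : Fin n, u j ≤ b := fun j => hb1 ▸ (hu j).2
    have hS : S b = n := by
      rw [hSdef]; simp only
      rw [Finset.sum_congr rfl fun j _ => if_pos (this j)]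
      simp
    rw [show (∑ j, if u j ≤ b then (1:ℝ) else 0) = S b from rfl, hS]
    have hnn : (n:ℝ) ≠ 0 := by positivity
    rw [div_self hnn, ← hb1]
    simpa using starDisc_nonneg hn (u := u)
  · -- b < 1
    refine le_of_forall_pos_le_add fun δ hδ => ?_
    have hne : (Finset.univ : Finset (Fin n)).Nonempty := ⟨⟨0, hn⟩, Finset.mem_univ _⟩
    set ε0 : ℝ := Finset.univ.inf' hne (fun j => if b < u j then u j - b else 1) with hε0
    have hε0pos : 0 < ε0 := by
      rw [hε0, Finset.lt_inf'_iff]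
      intro j _
      split
      · linarith [lt_of_lt_of_le (by assumption : b < u j) (le_refl (u j))]
      · norm_num
    set η : ℝ := min ε0 (min δ (1 - b)) with hη
    have hηpos : 0 < η := by
      rw [hη]
      exact lt_min hε0pos (lt_min hδ (by linarith))
    set v : ℝ := b + η with hv
    have hbv : b < v := by rw [hv]; linarith
    have hv1 : v ≤ 1 := by
      have : η ≤ 1 - b := le_trans (min_le_right _ _) (min_le_right _ _)
      rw [hv]; linarith
    have hvmem : v ∈ Set.Icc (0:ℝ) 1 := ⟨by linarith [hb.1], hv1⟩
    have hiff : ∀ j : Fin n, (u j ∈ Set.Ico (0:ℝ) v ↔ u j ≤ b) := by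
      intro j
      constructor
      · rintro ⟨h0, hlt⟩
        by_contra hc
        push_neg at hc
        have h1 : ε0 ≤ u j - b := by
          have := Finset.inf'_le (fun j => if b < u j then u j - b else 1)
            (Finset.mem_univ j)
          rwa [if_pos hc] at this
        have : v ≤ u j := by
          have hηε : η ≤ ε0 := min_le_left _ _
          rw [hv]; linarith
        linarith
      · intro h
        exact ⟨(hu j).1, lt_of_le_of_lt h hbv⟩
    have hSv : (∑ i, if u i ∈ Set.Ico (0:ℝ) v then (1:ℝ) else 0) = S b := by
      refine Finset.sum_congr rfl fun j _ => ?_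
      by_cases h : u j ≤ b
      · rw [if_pos ((hiff j).mpr h), if_pos h]
      · rw [if_neg (fun hmem => h ((hiff j).mp hmem)), if_neg h]
    have hkey := le_starDisc (u := u) hn hvmem
    rw [hSv] at hkey
    have hηδ : η ≤ δ := le_trans (min_le_right _ _) (min_le_left _ _)
    calc |S b / n - b| ≤ |S b / n - v| + |v - b| := by
          have : S b / n - b = (S b / n - v) + (v - b) := by ring
          rw [this]; exact abs_add_le _ _
      _ ≤ starDisc u + δ := by
          have : |v - b| = η := by rw [hv]; simp [abs_of_pos hηpos]
          rw [this]
          exact add_le_add hkey hηδ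



noncomputable def Tfun {n : ℕ} (u : Fin n → ℝ) (f : ℝ → ℝ) : ℝ :=
  (∫ t in (0:ℝ)..1, f t) - (n:ℝ)⁻¹ * ∑ i, f (u i)

variable {n : ℕ} {u : Fin n → ℝ}


lemma measurable_wfun : Measurable (wfun u) := by
  apply Measurable.sub
  · exact measurable_const.sub measurable_id
  · apply Measurable.const_mul
    apply Finset.measurable_sum
    intro j _
    have : (fun b => if b < u j then (1:ℝ) else 0) = (Set.Iio (u j)).indicator 1 := by
      funext b; by_cases h : b < u j <;> simp [Set.indicator, h]
    rw [this]
    exact (measurable_const (a := (1:ℝ))).indicator measurableSet_Iio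

lemma abs_wfun_le_two {b : ℝ} (hb : b ∈ Set.Ioc (0:ℝ) 1) : |wfun u b| ≤ 2 := by
  have h1 : (0:ℝ) ≤ ∑ j, (if b < u j then (1:ℝ) else 0) :=
    Finset.sum_nonneg fun j _ => by positivity
  have h2 : (∑ j, if b < u j then (1:ℝ) else 0) ≤ n := by
    calc (∑ j, if b < u j then (1:ℝ) else 0) ≤ ∑ _j : Fin n, (1:ℝ) :=
        Finset.sum_le_sum fun j _ => by split <;> norm_num
      _ = n := by simp
  rcases Nat.eq_zero_or_pos n with h | h
  · subst h; simp [wfun] at *; rw [abs_le]; constructor <;> linarith [hb.1, hb.2]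
  · have hnn : (0:ℝ) < n := by exact_mod_cast h
    have h3 : (0:ℝ) ≤ (n:ℝ)⁻¹ * ∑ j, (if b < u j then (1:ℝ) else 0) := by positivity
    have h4 : (n:ℝ)⁻¹ * (∑ j, if b < u j then (1:ℝ) else 0) ≤ 1 := by
      rw [inv_mul_le_iff₀ hnn, mul_one]; exact h2
    rw [wfun, abs_le]; constructor <;> [linarith [hb.2]; linarith [hb.1]]

/-- Generic Koksma step. -/
lemma Tstep (hn : 0 < n) (hu : ∀ i, u i ∈ Set.Icc (0:ℝ) 1)
    {G : ℝ → ℝ} {g' : ℝ → ℝ} (hGd : ∀ t, HasDerivAt G (g' t) t) (hg'c : Continuous g')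
    {κ κd : ℝ → ℝ} (hκd : ∀ y, HasDerivAt κ (κd y) y) (hκdc : Continuous κd) :
    Tfun u (fun t => κ (G t)) = ∫ b in (0:ℝ)..1, (κd (G b) * g' b) * wfun u b := by
  have hGc : Continuous G :=
    continuous_iff_continuousAt.mpr fun t => (hGd t).continuousAt
  set ρ : ℝ → ℝ := fun b => κd (G b) * g' b with hρdef
  have hρc : Continuous ρ := (hκdc.comp hGc).mul hg'c
  have hcomp : ∀ t : ℝ, κ (G t) = κ (G 0) + ∫ b in (0:ℝ)..t, ρ b := by
    intro t
    have := intervalIntegral.integral_eq_sub_of_hasDerivAt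
      (f := fun b => κ (G b)) (f' := ρ) (a := 0) (b := t)
      (fun b _ => (hκd (G b)).comp b (hGd b)) (hρc.intervalIntegrable _ _)
    linarith [this]
  have hFc : Continuous fun t => ∫ b in (0:ℝ)..t, ρ b :=
    intervalIntegral.continuous_primitive (fun a b => hρc.intervalIntegrable a b) 0
  have hexp : Tfun u (fun t => κ (G t))
      = (∫ t in (0:ℝ)..1, ∫ b in (0:ℝ)..t, ρ b) - (n:ℝ)⁻¹ * ∑ i, ∫ b in (0:ℝ)..(u i), ρ b := by
    rw [Tfun]
    rw [intervalIntegral.integral_congr (fun t _ => hcomp t)]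
    rw [intervalIntegral.integral_add intervalIntegrable_const (hFc.intervalIntegrable _ _)]
    rw [Finset.sum_congr rfl fun i _ => hcomp (u i), Finset.sum_add_distrib]
    have hnn : (n:ℝ) ≠ 0 := by positivity
    simp only [intervalIntegral.integral_const, Finset.sum_const, Finset.card_univ,
      Fintype.card_fin, smul_eq_mul, nsmul_eq_mul]
    rw [mul_add, ← mul_assoc, inv_mul_cancel₀ hnn]
    ring
  rw [hexp, T_core hn u hu hρc]

lemma isFiniteIoc : IsFiniteMeasure ((volume : Measure ℝ).restrict (Set.Ioc (0:ℝ) 1)) := by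
  constructor
  rw [Measure.restrict_apply_univ, Real.volume_Ioc]
  norm_num

lemma intervalIntegrable_cont_mul_wfun {f : ℝ → ℝ} (hf : Continuous f) :
    IntervalIntegrable (fun b => f b * wfun u b) volume 0 1 := by
  rw [intervalIntegrable_iff, Set.uIoc_of_le zero_le_one]
  obtain ⟨M, hM⟩ := isCompact_Icc.exists_bound_of_continuousOn
    (hf.continuousOn : ContinuousOn f (Set.Icc (0:ℝ) 1))
  refine Integrable.mono' (g := fun _ => (max M 0) * 2) (integrable_const _)
    ((hf.measurable.mul measurable_wfun).aestronglyMeasurable) ?_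
  filter_upwards [ae_restrict_mem measurableSet_Ioc] with b hb
  rw [Real.norm_eq_abs, abs_mul]
  have h1 : |f b| ≤ max M 0 :=
    le_trans (hM b (Set.mem_Icc_of_Ioc hb)) (le_max_left _ _)
  have h2 : |wfun u b| ≤ 2 := abs_wfun_le_two hb
  have := mul_le_mul h1 h2 (abs_nonneg _) (le_max_right _ _)
  linarith

lemma Tfun_swap (hn : 0 < n) (hu : ∀ i, u i ∈ Set.Icc (0:ℝ) 1)
    {c : ℝ × ℝ → ℝ} (hc : Continuous c) :
    Tfun u (fun s => ∫ b in (0:ℝ)..1, c (s, b) * wfun u b)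
      = ∫ b in (0:ℝ)..1, (Tfun u fun s => c (s, b)) * wfun u b := by
  haveI := isFiniteIoc
  obtain ⟨M, hM⟩ := (isCompact_Icc.prod isCompact_Icc).exists_bound_of_continuousOn
    (hc.continuousOn : ContinuousOn c (Set.Icc (0:ℝ) 1 ×ˢ Set.Icc (0:ℝ) 1))
  have hprodint : Integrable (fun p : ℝ × ℝ => c p * wfun u p.2)
      (((volume : Measure ℝ).restrict (Set.Ioc (0:ℝ) 1)).prod
        ((volume : Measure ℝ).restrict (Set.Ioc (0:ℝ) 1))) := by
    refine Integrable.mono' (g := fun _ => (max M 0) * 2) (integrable_const _)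
      ((hc.measurable.mul (measurable_wfun.comp measurable_snd)).aestronglyMeasurable) ?_
    rw [Measure.prod_restrict]
    filter_upwards [ae_restrict_mem (measurableSet_Ioc.prod measurableSet_Ioc)] with p hp
    rw [Real.norm_eq_abs, abs_mul]
    have hp1 : p.1 ∈ Set.Ioc (0:ℝ) 1 := hp.1
    have hp2 : p.2 ∈ Set.Ioc (0:ℝ) 1 := hp.2
    have h1 : |c p| ≤ max M 0 :=
      le_trans (hM p ⟨Set.mem_Icc_of_Ioc hp1, Set.mem_Icc_of_Ioc hp2⟩) (le_max_left _ _)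
    have h2 : |wfun u p.2| ≤ 2 := abs_wfun_le_two hp2
    have := mul_le_mul h1 h2 (abs_nonneg _) (le_max_right _ _)
    linarith
  have hswap : (∫ s in (0:ℝ)..1, ∫ b in (0:ℝ)..1, c (s, b) * wfun u b)
      = ∫ b in (0:ℝ)..1, ∫ s in (0:ℝ)..1, c (s, b) * wfun u b := by
    have e1 : (∫ s in (0:ℝ)..1, ∫ b in (0:ℝ)..1, c (s, b) * wfun u b)
        = ∫ s in Set.Ioc (0:ℝ) 1, ∫ b in Set.Ioc (0:ℝ) 1, c (s, b) * wfun u b := by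
      rw [intervalIntegral.integral_of_le zero_le_one]
      exact setIntegral_congr_fun measurableSet_Ioc
        (fun s _ => intervalIntegral.integral_of_le zero_le_one)
    have e2 : (∫ b in (0:ℝ)..1, ∫ s in (0:ℝ)..1, c (s, b) * wfun u b)
        = ∫ b in Set.Ioc (0:ℝ) 1, ∫ s in Set.Ioc (0:ℝ) 1, c (s, b) * wfun u b := by
      rw [intervalIntegral.integral_of_le zero_le_one]
      exact setIntegral_congr_fun measurableSet_Ioc
        (fun b _ => intervalIntegral.integral_of_le zero_le_one)
    rw [e1, e2]
    exact MeasureTheory.integral_integral_swap hprodint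
  have hparam : ∀ b : ℝ, Continuous fun s => c (s, b) := fun b => hc.comp (by continuity)
  have hintcol : Continuous fun b => ∫ s in (0:ℝ)..1, c (s, b) :=
    intervalIntegral.continuous_parametric_intervalIntegral_of_continuous
      (f := fun b s => c (s, b)) (hc.comp continuous_swap) continuous_const
  have hLHS : Tfun u (fun s => ∫ b in (0:ℝ)..1, c (s, b) * wfun u b)
      = (∫ b in (0:ℝ)..1, (∫ s in (0:ℝ)..1, c (s, b)) * wfun u b)
        - (n:ℝ)⁻¹ * ∑ i, ∫ b in (0:ℝ)..1, c (u i, b) * wfun u b := by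
    rw [Tfun, hswap]
    congr 1
    apply intervalIntegral.integral_congr
    intro b _
    simp only []
    rw [intervalIntegral.integral_mul_const]
  rw [hLHS]
  rw [← intervalIntegral.integral_finset_sum (f := fun i b => c (u i, b) * wfun u b)
    (fun i _ => intervalIntegrable_cont_mul_wfun (hc.comp (by continuity))),
    ← intervalIntegral.integral_const_mul]
  rw [← intervalIntegral.integral_sub]
  · apply intervalIntegral.integral_congr
    intro b _
    simp only [Tfun]
    have hsum2 : ∑ i, (n:ℝ)⁻¹ * (c (u i, b) * wfun u b)
        = ((n:ℝ)⁻¹ * ∑ i, c (u i, b)) * wfun u b := by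
      rw [Finset.mul_sum, Finset.sum_mul]
      exact Finset.sum_congr rfl fun i _ => by ring
    rw [Finset.mul_sum, hsum2]
    ring
  · exact intervalIntegrable_cont_mul_wfun hintcol
  · apply IntervalIntegrable.const_mul
    have : (fun b => ∑ i, c (u i, b) * wfun u b)
        = fun b => (∑ i, c (u i, b)) * wfun u b := by
      funext b; rw [Finset.sum_mul]
    rw [this]
    exact intervalIntegrable_cont_mul_wfun (by continuity)


lemma Tfun_mul_const {n : ℕ} {u : Fin n → ℝ} (f : ℝ → ℝ) (a : ℝ) :
    Tfun u (fun t => f t * a) = Tfun u f * a := by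
  rw [Tfun, Tfun, intervalIntegral.integral_mul_const, ← Finset.sum_mul]
  ring


/-- One-dimensional QMC bound for the MMD: for a `C¹` generator `G : [0,1] → ℝ` and a twice
continuously differentiable symmetric positive semidefinite kernel `k` with
`k(x,x) ≤ C_k` and `∂₁∂₂k(x,x) ≤ C_k`, one has
`MMD(P, Pⁿ) ≤ √C_k · (∫₀¹ |G′(u)| du) · D*({u_i})`. -/
theorem mmd_qmc_bound_one_dim (G : ℝ → ℝ) (hG : ContDiff ℝ 1 G)
    (k : ℝ → ℝ → ℝ) (hpsd : IsPSDKernel k)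
    (hk : ContDiff ℝ 2 (Function.uncurry k))
    (Ck : ℝ) (hCk : 0 < Ck)
    (hsup₀ : ∀ x : ℝ, k x x ≤ Ck)
    (hsup₁ : ∀ x : ℝ, deriv (fun y => deriv (fun x' => k x' y) x) x ≤ Ck)
    {n : ℕ} (hn : 0 < n) (u : Fin n → ℝ) (hu : ∀ i, u i ∈ Set.Icc (0 : ℝ) 1) :
    mmd k (Measure.map G ((volume : Measure ℝ).restrict (Set.Icc 0 1)))
        (empirical fun i => G (u i)) ≤
      Real.sqrt Ck * (∫ x in Set.Icc (0 : ℝ) 1, |deriv G x|) * starDisc u := by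
  classical
  set g' : ℝ → ℝ := deriv G with hg'def
  have hGd : ∀ t, HasDerivAt G (g' t) t := fun t => (hG.differentiable one_ne_zero t).hasDerivAt
  have hg'c : Continuous g' := hG.continuous_deriv le_rfl
  have hGc : Continuous G := hG.continuous
  have hkc : Continuous (uncurry k) := hk.continuous
  have hsym := hpsd.1
  have hnn : (n:ℝ) ≠ 0 := by positivity
  set D := starDisc u with hDdef
  have hD0 : 0 ≤ D := starDisc_nonneg hn
  set P := Measure.map G ((volume : Measure ℝ).restrict (Set.Icc (0:ℝ) 1)) with hP
  set Q := empirical fun i => G (u i) with hQ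
  have hQint : ∀ f : ℝ → ℝ, Continuous f → ∫ y, f y ∂Q = (n:ℝ)⁻¹ * ∑ i, f (G (u i)) := by
    intro f hf
    rw [hQ, empirical, MeasureTheory.integral_smul_measure, integral_finset_sum_measure
      (fun i _ => (integrable_const (f (G (u i)))).congr (ae_eq_dirac f).symm)]
    simp [integral_dirac, ENNReal.toReal_inv]
  have hPint : ∀ f : ℝ → ℝ, Continuous f → ∫ x, f x ∂P = ∫ s in (0:ℝ)..1, f (G s) := by
    intro f hf
    rw [hP, integral_map hGc.measurable.aemeasurable hf.aestronglyMeasurable,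
        MeasureTheory.integral_Icc_eq_integral_Ioc,
        ← intervalIntegral.integral_of_le zero_le_one]
  have hksc : ∀ x : ℝ, Continuous (k x) := fun x =>
    hkc.comp (Continuous.prodMk_right x)
  have hksc' : ∀ y : ℝ, Continuous (fun x => k x y) := fun y =>
    hkc.comp (continuous_id.prodMk continuous_const)
  have hparam1 : Continuous fun x => ∫ t in (0:ℝ)..1, k x (G t) :=
    intervalIntegral.continuous_parametric_intervalIntegral_of_continuous
      (f := fun x t => k x (G t))
      (hkc.comp (continuous_fst.prodMk (hGc.comp continuous_snd))) continuous_const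
  have hsumc : Continuous fun x => (n:ℝ)⁻¹ * ∑ j, k x (G (u j)) :=
    continuous_const.mul (continuous_finset_sum _ fun j _ => hksc' (G (u j)))
  -- Step A : mmdSq as a double Koksma functional
  have hA : mmdSq k P Q = Tfun u (fun s => Tfun u (fun t => k (G s) (G t))) := by
    have e1 : (∫ x, ∫ y, k x y ∂P ∂P)
        = ∫ s in (0:ℝ)..1, ∫ t in (0:ℝ)..1, k (G s) (G t) := by
      have einner : (fun x => ∫ y, k x y ∂P) = fun x => ∫ t in (0:ℝ)..1, k x (G t) :=
        funext fun x => hPint _ (hksc x)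
      rw [einner, hPint _ hparam1]
    have e2 : (∫ x, ∫ y, k x y ∂Q ∂P)
        = ∫ s in (0:ℝ)..1, (n:ℝ)⁻¹ * ∑ j, k (G s) (G (u j)) := by
      have einner : (fun x => ∫ y, k x y ∂Q) = fun x => (n:ℝ)⁻¹ * ∑ j, k x (G (u j)) :=
        funext fun x => hQint _ (hksc x)
      rw [einner, hPint _ hsumc]
    have e3 : (∫ x, ∫ y, k x y ∂Q ∂Q)
        = (n:ℝ)⁻¹ * ∑ i, ((n:ℝ)⁻¹ * ∑ j, k (G (u i)) (G (u j))) := by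
      have einner : (fun x => ∫ y, k x y ∂Q) = fun x => (n:ℝ)⁻¹ * ∑ j, k x (G (u j)) :=
        funext fun x => hQint _ (hksc x)
      rw [einner, hQint _ hsumc]
    have eT : Tfun u (fun s => Tfun u (fun t => k (G s) (G t)))
        = (∫ s in (0:ℝ)..1, ∫ t in (0:ℝ)..1, k (G s) (G t))
          - (∫ s in (0:ℝ)..1, (n:ℝ)⁻¹ * ∑ j, k (G s) (G (u j)))
          - (n:ℝ)⁻¹ * ∑ i, (∫ t in (0:ℝ)..1, k (G (u i)) (G t))
          + (n:ℝ)⁻¹ * ∑ i, ((n:ℝ)⁻¹ * ∑ j, k (G (u i)) (G (u j))) := by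
      simp only [Tfun]
      have hi1 : IntervalIntegrable (fun s => ∫ t in (0:ℝ)..1, k (G s) (G t)) volume 0 1 :=
        (hparam1.comp hGc).intervalIntegrable _ _
      have hi2 : IntervalIntegrable (fun s => (n:ℝ)⁻¹ * ∑ j, k (G s) (G (u j))) volume 0 1 :=
        (hsumc.comp hGc).intervalIntegrable _ _
      rw [intervalIntegral.integral_sub hi1 hi2]
      rw [Finset.sum_sub_distrib, mul_sub]
      ring
    have esym : (n:ℝ)⁻¹ * ∑ i, (∫ t in (0:ℝ)..1, k (G (u i)) (G t))
        = ∫ s in (0:ℝ)..1, (n:ℝ)⁻¹ * ∑ j, k (G s) (G (u j)) := by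
      have hci : ∀ i : Fin n, (∫ t in (0:ℝ)..1, k (G (u i)) (G t))
          = ∫ t in (0:ℝ)..1, k (G t) (G (u i)) :=
        fun i => intervalIntegral.integral_congr fun t _ => hsym _ _
      rw [Finset.sum_congr rfl (fun i _ => hci i),
          ← intervalIntegral.integral_finset_sum (f := fun j t => k (G t) (G (u j)))
            (fun j _ => ((hksc' (G (u j))).comp hGc).intervalIntegrable _ _),
          ← intervalIntegral.integral_const_mul]
    rw [mmdSq, e1, e2, e3, eT, esym]
    ring
  -- Step B : inner Koksma step
  have hinner : ∀ s : ℝ, Tfun u (fun t => k (G s) (G t))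
      = ∫ b in (0:ℝ)..1, (D1 k (G b, G s) * g' b) * wfun u b := by
    intro s
    have hκd : ∀ y : ℝ, HasDerivAt (fun y' => k (G s) y') (D1 k (y, G s)) y := by
      intro y
      have hfe : (fun y' => k (G s) y') = fun y' => k y' (G s) := funext fun y' => hsym _ _
      rw [hfe]
      exact hasDerivAt_fst hk y (G s)
    exact Tstep hn hu hGd hg'c hκd
      ((continuous_D1 hk).comp (continuous_id.prodMk continuous_const))
  -- Step C : swap
  set c : ℝ × ℝ → ℝ := fun p => D1 k (G p.2, G p.1) * g' p.2 with hcdef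
  have hcc : Continuous c :=
    ((continuous_D1 hk).comp ((hGc.comp continuous_snd).prodMk (hGc.comp continuous_fst))).mul
      (hg'c.comp continuous_snd)
  have hswap : Tfun u (fun s => Tfun u (fun t => k (G s) (G t)))
      = ∫ b in (0:ℝ)..1, (Tfun u fun s => c (s, b)) * wfun u b := by
    have hfe : (fun s => Tfun u (fun t => k (G s) (G t)))
        = fun s => ∫ b in (0:ℝ)..1, c (s, b) * wfun u b := funext fun s => hinner s
    rw [hfe]
    exact Tfun_swap hn hu hcc
  -- Step D : outer Koksma step
  have houter : ∀ b : ℝ, (Tfun u fun s => c (s, b))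
      = (∫ a in (0:ℝ)..1, (Psi k (G b, G a) * g' a) * wfun u a) * g' b := by
    intro b
    have e1 : (fun s => c (s, b)) = fun s => D1 k (G b, G s) * g' b := rfl
    rw [e1, Tfun_mul_const (fun s => D1 k (G b, G s)) (g' b)]
    congr 1
    exact Tstep hn hu hGd hg'c (κ := fun y => D1 k (G b, y))
      (κd := fun y => Psi k (G b, y)) (fun y => hasDerivAt_D1_snd hk (G b) y)
      ((continuous_Psi hk).comp (Continuous.prodMk_right (G b)))
  have hmm2 : mmdSq k P Q = ∫ b in (0:ℝ)..1, ∫ a in (0:ℝ)..1,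
      ((Psi k (G b, G a) * g' a) * wfun u a) * (g' b * wfun u b) := by
    rw [hA, hswap]
    apply intervalIntegral.integral_congr
    intro b _
    simp only []
    rw [houter b, mul_assoc, ← intervalIntegral.integral_mul_const]
  -- product measure formulation
  haveI := isFiniteIoc
  set μ := (volume : Measure ℝ).restrict (Set.Ioc (0:ℝ) 1) with hμ
  set H : ℝ × ℝ → ℝ := fun p =>
    ((Psi k (G p.1, G p.2) * g' p.2) * wfun u p.2) * (g' p.1 * wfun u p.1) with hHdef
  have hdiag : ∀ x : ℝ, Psi k (x, x) ≤ Ck := fun x => (psi_eq hk x x) ▸ hsup₁ x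
  have hPsiB : ∀ x y : ℝ, |Psi k (x, y)| ≤ Ck := fun x y => psi_bound hpsd hk hCk hdiag x y
  set bound : ℝ × ℝ → ℝ := fun p => (|g' p.1| * D) * (Ck * (|g' p.2| * D)) with hbdef
  have hint_f : Integrable (fun x => |g' x| * D) μ := by
    rw [hμ]
    exact ((hg'c.abs).integrableOn_Ioc).mul_const D
  have hbound_int : Integrable bound (μ.prod μ) :=
    Integrable.mul_prod hint_f (hint_f.const_mul Ck)
  have hHmeas : AEStronglyMeasurable H (μ.prod μ) := by
    have m1 : Measurable fun p : ℝ × ℝ => Psi k (G p.1, G p.2) :=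
      ((continuous_Psi hk).comp
        ((hGc.comp continuous_fst).prodMk (hGc.comp continuous_snd))).measurable
    have m2 : Measurable fun p : ℝ × ℝ => g' p.2 := (hg'c.comp continuous_snd).measurable
    have m3 : Measurable fun p : ℝ × ℝ => wfun u p.2 := measurable_wfun.comp measurable_snd
    have m4 : Measurable fun p : ℝ × ℝ => g' p.1 := (hg'c.comp continuous_fst).measurable
    have m5 : Measurable fun p : ℝ × ℝ => wfun u p.1 := measurable_wfun.comp measurable_fst
    exact (((m1.mul m2).mul m3).mul (m4.mul m5)).aestronglyMeasurable
  have hae : ∀ᵐ p ∂(μ.prod μ), ‖H p‖ ≤ bound p := by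
    rw [hμ, Measure.prod_restrict]
    filter_upwards [ae_restrict_mem (measurableSet_Ioc.prod measurableSet_Ioc)] with p hp
    have hp1 : p.1 ∈ Set.Ioc (0:ℝ) 1 := hp.1
    have hp2 : p.2 ∈ Set.Ioc (0:ℝ) 1 := hp.2
    have b1 : |Psi k (G p.1, G p.2)| ≤ Ck := hPsiB _ _
    have b2 : |wfun u p.2| ≤ D := abs_wfun_le hn hu (Set.mem_Icc_of_Ioc hp2)
    have b3 : |wfun u p.1| ≤ D := abs_wfun_le hn hu (Set.mem_Icc_of_Ioc hp1)
    rw [hHdef]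
    simp only [Real.norm_eq_abs]
    rw [abs_mul, abs_mul, abs_mul, abs_mul]
    have h12 : |Psi k (G p.1, G p.2)| * |g' p.2| ≤ Ck * |g' p.2| :=
      mul_le_mul_of_nonneg_right b1 (abs_nonneg _)
    have h123 : |Psi k (G p.1, G p.2)| * |g' p.2| * |wfun u p.2| ≤ Ck * |g' p.2| * D :=
      mul_le_mul h12 b2 (abs_nonneg _) (by positivity)
    have h45 : |g' p.1| * |wfun u p.1| ≤ |g' p.1| * D :=
      mul_le_mul_of_nonneg_left b3 (abs_nonneg _)
    have hfin : |Psi k (G p.1, G p.2)| * |g' p.2| * |wfun u p.2| * (|g' p.1| * |wfun u p.1|)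
        ≤ Ck * |g' p.2| * D * (|g' p.1| * D) :=
      mul_le_mul h123 h45 (by positivity) (by positivity)
    have heq : Ck * |g' p.2| * D * (|g' p.1| * D) = bound p := by
      rw [hbdef]; ring
    linarith [hfin]
  have hHint : Integrable H (μ.prod μ) := Integrable.mono' hbound_int hHmeas hae
  have hmm3 : mmdSq k P Q = ∫ p, H p ∂(μ.prod μ) := by
    rw [hmm2]
    have e1 : (∫ b in (0:ℝ)..1, ∫ a in (0:ℝ)..1,
          ((Psi k (G b, G a) * g' a) * wfun u a) * (g' b * wfun u b))
        = ∫ b in Set.Ioc (0:ℝ) 1, ∫ a in Set.Ioc (0:ℝ) 1,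
            ((Psi k (G b, G a) * g' a) * wfun u a) * (g' b * wfun u b) := by
      rw [intervalIntegral.integral_of_le zero_le_one]
      exact setIntegral_congr_fun measurableSet_Ioc
        (fun b _ => intervalIntegral.integral_of_le zero_le_one)
    rw [e1]
    exact MeasureTheory.integral_integral (f := fun b a =>
      ((Psi k (G b, G a) * g' a) * wfun u a) * (g' b * wfun u b)) hHint
  -- the bound
  set IIm : ℝ := ∫ x, |g' x| ∂μ with hIImdef
  have hIIm0 : 0 ≤ IIm := integral_nonneg fun x => abs_nonneg _
  have hboundval : (∫ p, bound p ∂(μ.prod μ)) = Ck * (IIm * D)^2 := by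
    rw [hbdef]
    rw [MeasureTheory.integral_prod_mul (f := fun x => |g' x| * D)
      (g := fun x => Ck * (|g' x| * D))]
    rw [MeasureTheory.integral_mul_const, MeasureTheory.integral_const_mul, MeasureTheory.integral_mul_const]
    ring
  have hmmle : mmdSq k P Q ≤ Ck * (IIm * D)^2 := by
    rw [hmm3, ← hboundval]
    calc (∫ p, H p ∂(μ.prod μ)) ≤ |∫ p, H p ∂(μ.prod μ)| := le_abs_self _
      _ = ‖∫ p, H p ∂(μ.prod μ)‖ := (Real.norm_eq_abs _).symm
      _ ≤ ∫ p, ‖H p‖ ∂(μ.prod μ) := norm_integral_le_integral_norm _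
      _ ≤ ∫ p, bound p ∂(μ.prod μ) := integral_mono_ae hHint.norm hbound_int hae
  have hIcc : (∫ x in Set.Icc (0:ℝ) 1, |deriv G x|) = IIm := by
    rw [MeasureTheory.integral_Icc_eq_integral_Ioc]
  rw [mmd]
  calc Real.sqrt (mmdSq k P Q) ≤ Real.sqrt (Ck * (IIm * D)^2) := Real.sqrt_le_sqrt hmmle
    _ = Real.sqrt Ck * (IIm * D) := by
        rw [Real.sqrt_mul hCk.le, Real.sqrt_sq (by positivity)]
    _ = Real.sqrt Ck * (∫ x in Set.Icc (0:ℝ) 1, |deriv G x|) * D := by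
        rw [hIcc]; ring
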